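/- Given a minimum trail decomposition of a connected graph G into K trails (K = (1/2)|Odd(G)| if Odd(G) is nonempty, else K = 1), subdividing each trail into trails of length at most L yields an L-trail decomposition whose size exceeds the minimum L-trail decomposition size by at most ⌊K(1 − 1/L)⌋. -/

import Mathlib

/-- A trail in a simple graph: a walk with no repeated edges, together with its endpoints. -/
structure GraphTrail {V : Type*} (G : SimpleGraph V) where
  first : V
  last : V
  walk : G.Walk first last
  isTrail : walk.IsTrail

namespace GraphTrail

variable {V : Type*} {G : SimpleGraph V}

/-- The list of edges traversed by the trail. -/
def edges (T : GraphTrail G) : List (Sym2 V) := T.walk.edges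

/-- The list of vertices visited by the trail (with multiplicity). -/
def support (T : GraphTrail G) : List V := T.walk.support

end GraphTrail

/-- A collection of trails is edge-disjoint if no two distinct trails share an edge. -/
def TrailsEdgeDisjoint {V : Type*} {G : SimpleGraph V} (C : Finset (GraphTrail G)) : Prop :=
  (C : Set (GraphTrail G)).Pairwise fun T₁ T₂ => ∀ e, e ∈ T₁.edges → e ∉ T₂.edges

/-- A trail cover of `G`: a set of pairwise edge-disjoint trails visiting every vertex. -/
def IsTrailCover {V : Type*} (G : SimpleGraph V) (C : Finset (GraphTrail G)) : Prop :=
  TrailsEdgeDisjoint C ∧ ∀ v : V, ∃ T ∈ C, v ∈ T.support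

/-- A trail decomposition of `G`: a set of pairwise edge-disjoint trails covering every edge. -/
def IsTrailDecomposition {V : Type*} (G : SimpleGraph V) (C : Finset (GraphTrail G)) : Prop :=
  TrailsEdgeDisjoint C ∧ ∀ e ∈ G.edgeSet, ∃ T ∈ C, e ∈ T.edges

/-- A trail decomposition all of whose trails have at most `L` edges. -/
def IsBoundedTrailDecomposition {V : Type*} (G : SimpleGraph V) (L : ℕ)
    (D : Finset (GraphTrail G)) : Prop :=
  IsTrailDecomposition G D ∧ ∀ T ∈ D, T.edges.length ≤ L


namespace SubApprox

/-- Drop the first `n` edges of a walk. -/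
def dropW {V : Type*} {G : SimpleGraph V} {v : V} :
    {u : V} → G.Walk u v → ℕ → Σ w, G.Walk w v
  | _, p, 0 => ⟨_, p⟩
  | _, .nil, _+1 => ⟨_, .nil⟩
  | _, .cons _ p, n+1 => dropW p n

/-- Take the first `n` edges of a walk. -/
def takeW {V : Type*} {G : SimpleGraph V} :
    {u v : V} → G.Walk u v → ℕ → Σ w, G.Walk u w
  | _, _, _, 0 => ⟨_, .nil⟩
  | _, _, .nil, _+1 => ⟨_, .nil⟩
  | _, _, .cons h p, n+1 => ⟨(takeW p n).1, .cons h (takeW p n).2⟩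

theorem edges_dropW {V : Type*} {G : SimpleGraph V} {v : V} :
    ∀ {u : V} (p : G.Walk u v) (n : ℕ), (dropW p n).2.edges = p.edges.drop n
  | _, p, 0 => by cases p <;> simp [dropW]
  | _, .nil, n+1 => by simp [dropW]
  | _, .cons h p, n+1 => by simp [dropW, edges_dropW p n]

theorem edges_takeW {V : Type*} {G : SimpleGraph V} :
    ∀ {u v : V} (p : G.Walk u v) (n : ℕ), (takeW p n).2.edges = p.edges.take n
  | _, _, p, 0 => by cases p <;> simp [takeW]
  | _, _, .nil, n+1 => by simp [takeW]
  | _, _, .cons h p, n+1 => by simp [takeW, edges_takeW p n]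

end SubApprox

namespace SubApprox

theorem mem_seg {α : Type*} {l : List α} {j L : ℕ} (hL : 0 < L) (hj : j < l.length) :
    l[j] ∈ (l.drop (j / L * L)).take L := by
  set a := j / L * L with ha
  have h1 : a ≤ j := Nat.div_mul_le_self _ _
  have h2 : j < a + L := by
    have := Nat.mod_lt j hL
    have := Nat.div_add_mod j L
    have hc : L * (j / L) = j / L * L := Nat.mul_comm _ _
    omega
  have hlen : j - a < ((l.drop a).take L).length := by
    simp only [List.length_take, List.length_drop]
    omega
  have heq : ((l.drop a).take L)[j - a] = l[j] := by
    rw [List.getElem_take, List.getElem_drop]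
    congr 1
    omega
  exact heq ▸ List.getElem_mem hlen

theorem disjoint_segs {α : Type*} {l : List α} (hnd : l.Nodup) {a b L : ℕ}
    (hab : a + L ≤ b) : ∀ x ∈ (l.drop a).take L, x ∉ (l.drop b).take L := by
  intro x hx hx'
  have h1 : x ∈ l.take (a + L) := by
    rw [List.take_add]
    exact List.mem_append_right _ hx
  have h2 : x ∈ l.drop (a + L) := by
    have hd : l.drop b = (l.drop (a + L)).drop (b - (a + L)) := by
      rw [List.drop_drop]
      congr 1
      omega
    have hxb : x ∈ l.drop b := List.take_subset _ _ hx'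
    rw [hd] at hxb
    exact List.drop_subset _ _ hxb
  have hnd' : (l.take (a + L) ++ l.drop (a + L)).Nodup := by
    rw [List.take_append_drop]; exact hnd
  exact (List.disjoint_of_nodup_append hnd') h1 h2

theorem div_add_div_le {L : ℕ} (hL : 0 < L) (a b : ℕ) : a / L + b / L ≤ (a + b) / L := by
  rw [Nat.le_div_iff_mul_le hL, add_mul]
  exact Nat.add_le_add (Nat.div_mul_le_self _ _) (Nat.div_mul_le_self _ _)

theorem sum_div_le {α : Type*} {L : ℕ} (hL : 0 < L) (s : Finset α) (f : α → ℕ) :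
    ∑ i ∈ s, f i / L ≤ (∑ i ∈ s, f i) / L := by
  classical
  induction s using Finset.induction with
  | empty => simp
  | insert _ _ hx ih =>
    rw [Finset.sum_insert hx, Finset.sum_insert hx]
    exact le_trans (Nat.add_le_add_left ih _) (div_add_div_le hL _ _)

end SubApprox

namespace SubApprox

variable {V : Type*} {G : SimpleGraph V}

/-- The `i`-th piece (of length at most `L`) of a trail. -/
def piece (L : ℕ) (T : GraphTrail G) (i : ℕ) : GraphTrail G :=
  ⟨_, _, (takeW (dropW T.walk (i * L)).2 L).2, by
    rw [SimpleGraph.Walk.isTrail_def, edges_takeW, edges_dropW]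
    exact T.isTrail.edges_nodup.sublist
      ((List.take_sublist _ _).trans (List.drop_sublist _ _))⟩

theorem edges_piece (L : ℕ) (T : GraphTrail G) (i : ℕ) :
    (piece L T i).edges = (T.edges.drop (i * L)).take L := by
  simp [piece, GraphTrail.edges, edges_takeW, edges_dropW]

/-- The number of pieces of a trail: `⌈t/L⌉`. -/
def numPieces (L : ℕ) (T : GraphTrail G) : ℕ := (T.edges.length + L - 1) / L

/-- The list of pieces of a trail. -/
def pieces (L : ℕ) (T : GraphTrail G) : List (GraphTrail G) :=
  (List.range (numPieces L T)).map (piece L T)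

theorem lt_of_lt_numPieces {L i : ℕ} (hL : 0 < L) {T : GraphTrail G}
    (hi : i < numPieces L T) : i * L < T.edges.length := by
  have h := (Nat.le_div_iff_mul_le hL).mp hi
  rw [Nat.succ_mul] at h
  omega

theorem div_lt_numPieces {L j : ℕ} (hL : 0 < L) {T : GraphTrail G}
    (hj : j < T.edges.length) : j / L < numPieces L T := by
  rw [numPieces, Nat.lt_iff_add_one_le, Nat.le_div_iff_mul_le hL, add_mul, one_mul]
  have := Nat.div_mul_le_self j L
  omega

theorem edgeMem_piece {L j : ℕ} (hL : 0 < L) {T : GraphTrail G}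
    (hj : j < T.edges.length) : T.edges[j] ∈ (piece L T (j / L)).edges := by
  rw [edges_piece]
  exact mem_seg hL hj

theorem piece_edges_subset (L : ℕ) (T : GraphTrail G) (i : ℕ) :
    ∀ e ∈ (piece L T i).edges, e ∈ T.edges := by
  rw [edges_piece]
  exact fun e he => List.drop_subset _ _ (List.take_subset _ _ he)

theorem piece_edges_nonempty {L i : ℕ} (hL : 0 < L) {T : GraphTrail G}
    (hi : i < numPieces L T) : ∃ e, e ∈ (piece L T i).edges := by
  have h := lt_of_lt_numPieces hL hi
  refine ⟨T.edges[i * L], ?_⟩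
  have := edgeMem_piece hL (T := T) h
  rwa [Nat.mul_div_cancel _ hL] at this

theorem piece_edges_disjoint {L : ℕ} (T : GraphTrail G) {i j : ℕ} (hij : i < j) :
    ∀ e ∈ (piece L T i).edges, e ∉ (piece L T j).edges := by
  rw [edges_piece, edges_piece]
  refine disjoint_segs T.isTrail.edges_nodup ?_
  have := Nat.mul_le_mul_right L (show i + 1 ≤ j from hij)
  rw [add_mul, one_mul] at this
  omega

theorem piece_inj {L : ℕ} (hL : 0 < L) {T : GraphTrail G} {i j : ℕ}
    (hi : i < numPieces L T) (hj : j < numPieces L T)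
    (h : piece L T i = piece L T j) : i = j := by
  rcases lt_trichotomy i j with hlt | heq | hgt
  · obtain ⟨e, he⟩ := piece_edges_nonempty hL hi
    exact absurd (h ▸ he) (piece_edges_disjoint T hlt e he)
  · exact heq
  · obtain ⟨e, he⟩ := piece_edges_nonempty hL hj
    exact absurd (h ▸ he) (piece_edges_disjoint T hgt e he)

theorem pieces_nodup {L : ℕ} (hL : 0 < L) (T : GraphTrail G) : (pieces L T).Nodup :=
  List.nodup_range.map_on fun i hi j hj h =>
    piece_inj hL (List.mem_range.mp hi) (List.mem_range.mp hj) h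

theorem mem_pieces {L : ℕ} {T P : GraphTrail G} :
    P ∈ pieces L T ↔ ∃ i, i < numPieces L T ∧ piece L T i = P := by
  simp [pieces, List.mem_map, List.mem_range]

theorem length_pieces (L : ℕ) (T : GraphTrail G) :
    (pieces L T).length = numPieces L T := by
  simp [pieces]

theorem piece_length_le (L : ℕ) (T : GraphTrail G) (i : ℕ) :
    (piece L T i).edges.length ≤ L := by
  rw [edges_piece]
  exact (List.length_take_le _ _)

end SubApprox

open SubApprox in
/-- Subdividing each trail of a minimum trail decomposition of a connected
graph `G` into trails of length at most `L` (a trail of length `t` becoming `⌈t/L⌉` pieces)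
yields an `L`-trail decomposition whose size exceeds that of a minimum `L`-trail decomposition
by at most `⌊K(1 − 1/L)⌋ = K − ⌈K/L⌉`, where `K` is the number of trails of the minimum
decomposition. -/
theorem subdivision_approximation {V : Type*} [Fintype V] (G : SimpleGraph V)
    (hconn : G.Connected) (L : ℕ) (hL : 0 < L)
    (D : Finset (GraphTrail G)) (hD : IsTrailDecomposition G D)
    (hmin : ∀ D' : Finset (GraphTrail G), IsTrailDecomposition G D' → D.card ≤ D'.card) :
    ∃ D' : Finset (GraphTrail G), IsBoundedTrailDecomposition G L D' ∧
      D'.card = ∑ T ∈ D, (T.edges.length + L - 1) / L ∧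
      ∀ D'' : Finset (GraphTrail G), IsBoundedTrailDecomposition G L D'' →
        D'.card ≤ D''.card + (D.card - (D.card + L - 1) / L) := by
  classical
  -- every trail of a minimum decomposition has at least one edge
  have hne : ∀ T ∈ D, T.edges ≠ [] := by
    intro T hT hTnil
    have hdec : IsTrailDecomposition G (D.erase T) := by
      constructor
      · exact hD.1.mono (by rw [Finset.coe_erase]; exact Set.diff_subset)
      · intro e he
        obtain ⟨T', hT', heT'⟩ := hD.2 e he
        refine ⟨T', Finset.mem_erase.mpr ⟨?_, hT'⟩, heT'⟩
        rintro rfl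
        rw [hTnil] at heT'
        exact List.not_mem_nil heT'
    have h1 := hmin _ hdec
    have h2 := Finset.card_erase_of_mem hT
    have h3 : 0 < D.card := Finset.card_pos.mpr ⟨T, hT⟩
    omega
  set D' : Finset (GraphTrail G) := D.biUnion (fun T => (pieces L T).toFinset) with hD'def
  have hmemD' : ∀ P : GraphTrail G, P ∈ D' ↔ ∃ T ∈ D, P ∈ pieces L T := by
    intro P
    simp [hD'def, Finset.mem_biUnion, List.mem_toFinset]
  -- edge-disjointness of the pieces
  have hdisj : TrailsEdgeDisjoint D' := by
    intro P₁ h₁ P₂ h₂ hPne e he₁ he₂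
    obtain ⟨T₁, hT₁, hp₁⟩ := (hmemD' P₁).mp (Finset.mem_coe.mp h₁)
    obtain ⟨T₂, hT₂, hp₂⟩ := (hmemD' P₂).mp (Finset.mem_coe.mp h₂)
    obtain ⟨i, hi, rfl⟩ := mem_pieces.mp hp₁
    obtain ⟨j, hj, rfl⟩ := mem_pieces.mp hp₂
    by_cases hT : T₁ = T₂
    · subst hT
      rcases lt_trichotomy i j with h | h | h
      · exact piece_edges_disjoint T₁ h e he₁ he₂
      · exact hPne (by rw [h])
      · exact piece_edges_disjoint T₁ h e he₂ he₁
    · exact hD.1 hT₁ hT₂ hT e (piece_edges_subset _ _ _ e he₁)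
        (piece_edges_subset _ _ _ e he₂)
  -- every edge is covered by some piece
  have hcover : ∀ e ∈ G.edgeSet, ∃ P ∈ D', e ∈ P.edges := by
    intro e he
    obtain ⟨T, hT, heT⟩ := hD.2 e he
    obtain ⟨j, hj, rfl⟩ := List.mem_iff_getElem.mp heT
    refine ⟨piece L T (j / L), ?_, edgeMem_piece hL hj⟩
    exact (hmemD' _).mpr ⟨T, hT, mem_pieces.mpr ⟨j / L, div_lt_numPieces hL hj, rfl⟩⟩
  -- each piece has at most L edges
  have hbdd : ∀ P ∈ D', P.edges.length ≤ L := by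
    intro P hP
    obtain ⟨T, hT, hp⟩ := (hmemD' P).mp hP
    obtain ⟨i, hi, rfl⟩ := mem_pieces.mp hp
    exact piece_length_le L T i
  -- cardinality of D'
  have hcard : D'.card = ∑ T ∈ D, (T.edges.length + L - 1) / L := by
    rw [hD'def, Finset.card_biUnion]
    · refine Finset.sum_congr rfl fun T hT => ?_
      rw [List.toFinset_card_of_nodup (pieces_nodup hL T), length_pieces]
      rfl
    · intro T₁ h₁ T₂ h₂ hne'
      rw [Function.onFun, Finset.disjoint_left]
      intro P hP₁ hP₂
      rw [List.mem_toFinset] at hP₁ hP₂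
      obtain ⟨i, hi, rfl⟩ := mem_pieces.mp hP₁
      obtain ⟨j, hj, hPj⟩ := mem_pieces.mp hP₂
      obtain ⟨e, he⟩ := piece_edges_nonempty hL hi
      have he₂ : e ∈ T₂.edges := piece_edges_subset L T₂ j e (hPj ▸ he)
      exact hD.1 h₁ h₂ hne' e (piece_edges_subset L T₁ i e he) he₂
  refine ⟨D', ⟨⟨hdisj, hcover⟩, hbdd⟩, hcard, ?_⟩
  intro D'' hD''
  set K := D.card with hK
  set S := ∑ T ∈ D, T.edges.length with hS
  have hlen1 : ∀ T ∈ D, 1 ≤ T.edges.length := fun T hT =>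
    List.length_pos_iff.mpr (hne T hT)
  have hKS : K ≤ S := by
    calc K = ∑ _T ∈ D, 1 := Finset.card_eq_sum_ones D
    _ ≤ S := Finset.sum_le_sum hlen1
  have hsub : ∑ T ∈ D, (T.edges.length - 1) = S - K := by
    have h1 : ∑ T ∈ D, (T.edges.length - 1) + K = S := by
      rw [hK, Finset.card_eq_sum_ones D, ← Finset.sum_add_distrib, hS]
      exact Finset.sum_congr rfl fun T hT => by have := hlen1 T hT; omega
    omega
  have hceil : ∀ T ∈ D, (T.edges.length + L - 1) / L = (T.edges.length - 1) / L + 1 := by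
    intro T hT
    have h1 := hlen1 T hT
    have h2 : T.edges.length + L - 1 = (T.edges.length - 1) + L := by omega
    rw [h2, Nat.add_div_right _ hL]
  have hDcard : D'.card = ∑ T ∈ D, (T.edges.length - 1) / L + K := by
    rw [hcard, Finset.sum_congr rfl hceil, Finset.sum_add_distrib, hK,
      Finset.card_eq_sum_ones D]
  have h2 : ∑ T ∈ D, (T.edges.length - 1) / L ≤ (S - K) / L := by
    calc ∑ T ∈ D, (T.edges.length - 1) / L
        ≤ (∑ T ∈ D, (T.edges.length - 1)) / L := sum_div_le hL _ _
    _ = (S - K) / L := by rw [hsub]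
  -- total number of edges is at most L * D''.card
  have hSle : S ≤ D''.card * L := by
    have hbU : (D.biUnion fun T => T.edges.toFinset) ⊆
        (D''.biUnion fun T => T.edges.toFinset) := by
      intro e hee
      rw [Finset.mem_biUnion] at hee ⊢
      obtain ⟨T, hT, heT⟩ := hee
      rw [List.mem_toFinset] at heT
      have heG : e ∈ G.edgeSet := T.walk.edges_subset_edgeSet heT
      obtain ⟨T'', hT'', h''⟩ := hD''.1.2 e heG
      exact ⟨T'', hT'', List.mem_toFinset.mpr h''⟩
    have hcd : (D.biUnion fun T => T.edges.toFinset).card = S := by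
      rw [Finset.card_biUnion]
      · exact Finset.sum_congr rfl fun T hT =>
          List.toFinset_card_of_nodup T.isTrail.edges_nodup
      · intro T₁ h₁ T₂ h₂ hne'
        rw [Function.onFun, Finset.disjoint_left]
        intro e he₁ he₂
        rw [List.mem_toFinset] at he₁ he₂
        exact hD.1 h₁ h₂ hne' e he₁ he₂
    calc S = (D.biUnion fun T => T.edges.toFinset).card := hcd.symm
    _ ≤ (D''.biUnion fun T => T.edges.toFinset).card := Finset.card_le_card hbU
    _ ≤ ∑ T ∈ D'', T.edges.toFinset.card := Finset.card_biUnion_le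
    _ ≤ ∑ _T ∈ D'', L := Finset.sum_le_sum fun T hT =>
        le_trans (List.toFinset_card_le _) (hD''.2 T hT)
    _ = D''.card * L := by rw [Finset.sum_const, smul_eq_mul]
  have hKceil : (K + L - 1) / L ≤ K := by
    have hK1 : K ≤ L * K := Nat.le_mul_of_pos_left K hL
    calc (K + L - 1) / L ≤ (L * K + (L - 1)) / L := Nat.div_le_div_right (by omega)
    _ = K + (L - 1) / L := Nat.mul_add_div hL _ _
    _ = K := by rw [Nat.div_eq_of_lt (by omega), add_zero]
  have hfin : (S - K) / L + (K + L - 1) / L ≤ D''.card := by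
    have hS2 : S + L - 1 ≤ L * D''.card + (L - 1) := by
      have : S ≤ L * D''.card := by rw [Nat.mul_comm]; exact hSle
      omega
    calc (S - K) / L + (K + L - 1) / L
        ≤ ((S - K) + (K + L - 1)) / L := div_add_div_le hL _ _
    _ = (S + L - 1) / L := by congr 1; omega
    _ ≤ (L * D''.card + (L - 1)) / L := Nat.div_le_div_right hS2
    _ = D''.card + (L - 1) / L := Nat.mul_add_div hL _ _
    _ = D''.card := by rw [Nat.div_eq_of_lt (by omega), add_zero]
  rw [hDcard]
  omega
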